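/- Let n_1, …, n_D be positive reals and C ≥ D an integer, and let k be any greedy multiplicity vector (obtained by initializing k_d = 1 for every d and, for C − D steps, incrementing k_{d*} for some d* ∈ argmax_{d ∈ [D]} n_d/k_d). Then k minimizes the maximum per-client domain average: max_{d ∈ [D]} n_d/k_d ≤ max_{d ∈ [D]} n_d/k'_d for every vector k' of positive integers with Σ_{d=1}^D k'_d = C. -/
import Mathlib


/-- `IsGreedy n steps k` : `k` is obtained from the all-ones multiplicity
vector by performing `steps` greedy increments, each time incrementing some
`d* ∈ argmax_d n d / k d`. -/
def IsGreedy {D : ℕ} (n : Fin D → ℝ) (steps : ℕ) (k : Fin D → ℕ) : Prop :=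
  ∃ seq : ℕ → Fin D → ℕ,
    seq 0 = (fun _ => 1) ∧
    (∀ t < steps, ∃ dstar : Fin D,
      (∀ d, n d / (seq t d : ℝ) ≤ n dstar / (seq t dstar : ℝ)) ∧
      seq (t + 1) = Function.update (seq t) dstar (seq t dstar + 1)) ∧
    k = seq steps

/-- Any greedy multiplicity vector `k` (obtained by `C − D` greedy increments
starting from all ones) minimizes the maximum per-client domain average
`max_d n d / k d` among all positive-integer multiplicity vectors summing
to `C`. -/
theorem greedy_minimizes_max_average (D C : ℕ) (hD : 0 < D) (hDC : D ≤ C)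
    (n : Fin D → ℝ) (hn : ∀ d, 0 < n d)
    (k : Fin D → ℕ) (hk : IsGreedy n (C - D) k) :
    ∀ k' : Fin D → ℕ, (∀ d, 1 ≤ k' d) → (∑ d, k' d = C) →
      Finset.univ.sup' ⟨⟨0, hD⟩, Finset.mem_univ _⟩ (fun d => n d / (k d : ℝ))
        ≤ Finset.univ.sup' ⟨⟨0, hD⟩, Finset.mem_univ _⟩
            (fun d => n d / (k' d : ℝ)) := by
  intro k' hk'1 hk'sum
  obtain ⟨seq, h0, hstep, hkeq⟩ := hk
  set S := C - D with hS
  have hne : (Finset.univ : Finset (Fin D)).Nonempty := ⟨⟨0, hD⟩, Finset.mem_univ _⟩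
  -- one-step monotonicity
  have hmono1 : ∀ t < S, ∀ d, seq t d ≤ seq (t + 1) d := by
    intro t ht d
    obtain ⟨ds, _, hupd⟩ := hstep t ht
    rcases eq_or_ne d ds with h | h
    · subst h; simp [hupd]
    · simp [hupd, Function.update_of_ne h]
  -- monotonicity
  have hmono : ∀ t, t ≤ S → ∀ s, s ≤ t → ∀ d, seq s d ≤ seq t d := by
    intro t
    induction t with
    | zero => intro _ s hs d; simp [Nat.le_zero.mp hs]
    | succ t ih =>
      intro ht s hs d
      by_cases h : s ≤ t
      · exact le_trans (ih (by omega) s h d) (hmono1 t (by omega) d)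
      · have : s = t + 1 := by omega
        subst this; exact le_rfl
  have hpos : ∀ t ≤ S, ∀ d, 1 ≤ seq t d := by
    intro t ht d
    have := hmono t ht 0 (Nat.zero_le _) d
    rw [h0] at this
    exact this
  -- sums
  have hsum : ∀ t ≤ S, ∑ d, seq t d = D + t := by
    intro t
    induction t with
    | zero => intro _; rw [h0]; simp
    | succ t ih =>
      intro ht
      obtain ⟨ds, _, hupd⟩ := hstep t (by omega)
      have h2 : ∑ d, seq t d = ∑ d ∈ Finset.univ \ {ds}, seq t d + seq t ds :=
        Finset.sum_eq_sum_sdiff_singleton_add (Finset.mem_univ ds) _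
      rw [hupd, Finset.sum_update_of_mem (Finset.mem_univ ds)]
      have h3 := ih (by omega)
      omega
  have hksum : ∑ d, k d = C := by
    rw [hkeq, hsum S le_rfl]; omega
  have hkpos : ∀ d, 1 ≤ k d := by
    intro d; rw [hkeq]; exact hpos S le_rfl d
  -- the maximizing index for greedy
  obtain ⟨d0, -, hd0⟩ := Finset.exists_mem_eq_sup' hne (fun d => n d / (k d : ℝ))
  rw [hd0]
  by_cases hc : k' d0 ≤ k d0
  · calc n d0 / (k d0 : ℝ) ≤ n d0 / (k' d0 : ℝ) := by
          apply div_le_div_of_nonneg_left (hn d0).le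
          · exact_mod_cast hk'1 d0
          · exact_mod_cast hc
      _ ≤ _ := Finset.le_sup' (fun d => n d / (k' d : ℝ)) (Finset.mem_univ d0)
  · push_neg at hc
    -- there must be some d1 with k' d1 < k d1
    have hex : ∃ d1, k' d1 < k d1 := by
      by_contra hcon
      push_neg at hcon
      have : (∑ d, k d) < ∑ d, k' d := by
        apply Finset.sum_lt_sum (fun d _ => hcon d) ⟨d0, Finset.mem_univ d0, hc⟩
      omega
    obtain ⟨d1, hd1⟩ := hex
    have hk1_2 : 2 ≤ k d1 := by have := hk'1 d1; omega
    -- the set of times where d1 was incremented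
    set T : Finset ℕ := (Finset.range S).filter (fun t => seq (t + 1) d1 ≠ seq t d1)
      with hT
    have hTne : T.Nonempty := by
      by_contra hTe
      rw [Finset.not_nonempty_iff_eq_empty] at hTe
      have hconst : ∀ t ≤ S, seq t d1 = 1 := by
        intro t
        induction t with
        | zero => intro _; rw [h0]
        | succ t ih =>
          intro ht
          have hnotT : t ∉ T := by rw [hTe]; exact Finset.notMem_empty t
          rw [hT, Finset.mem_filter] at hnotT
          push_neg at hnotT
          have h4 := hnotT (Finset.mem_range.mpr (by omega))
          exact h4.trans (ih (by omega))
      have := hconst S le_rfl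
      rw [← hkeq] at this
      omega
    set t := T.max' hTne with ht
    have htmem : t ∈ T := T.max'_mem hTne
    rw [hT, Finset.mem_filter, Finset.mem_range] at htmem
    obtain ⟨htS, htne⟩ := htmem
    obtain ⟨ds, hmax, hupd⟩ := hstep t htS
    have hds : ds = d1 := by
      by_contra h
      apply htne
      rw [hupd, Function.update_of_ne (Ne.symm h)]
    rw [hds] at hmax hupd
    have hstep1 : seq (t + 1) d1 = seq t d1 + 1 := by rw [hupd]; simp
    -- seq is constant at d1 after time t+1
    have hconst2 : ∀ s, t + 1 ≤ s → s ≤ S → seq s d1 = seq (t + 1) d1 := by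
      intro s hs
      induction s, hs using Nat.le_induction with
      | base => intro _; rfl
      | succ s hs ih =>
        intro hsS
        have hsnotT : s ∉ T := by
          intro hsT
          have := T.le_max' s hsT
          omega
        rw [hT, Finset.mem_filter, Finset.mem_range] at hsnotT
        push_neg at hsnotT
        rw [hsnotT (by omega)]
        exact ih (by omega)
    have hfin : k d1 = seq t d1 + 1 := by
      rw [hkeq, hconst2 S (by omega) le_rfl, hstep1]
    have hk'le : k' d1 ≤ seq t d1 := by omega
    have hseqpos : ∀ d, 1 ≤ seq t d := hpos t (by omega)
    calc n d0 / (k d0 : ℝ)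
        ≤ n d0 / (seq t d0 : ℝ) := by
          apply div_le_div_of_nonneg_left (hn d0).le
          · exact_mod_cast hseqpos d0
          · exact_mod_cast (hkeq ▸ hmono S le_rfl t (by omega) d0)
      _ ≤ n d1 / (seq t d1 : ℝ) := hmax d0
      _ ≤ n d1 / (k' d1 : ℝ) := by
          apply div_le_div_of_nonneg_left (hn d1).le
          · exact_mod_cast hk'1 d1
          · exact_mod_cast hk'le
      _ ≤ _ := Finset.le_sup' (fun d => n d / (k' d : ℝ)) (Finset.mem_univ d1)
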